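/- Let v₁ = (0,0,0), v₂ = (1000,0,0), v₃ = (392,794,0), v₄ = (−369,229,319), v₅ = (423,839,330), v₆ = (220,−113,101), v₇ = (306,800,−299), v₈ = (676,367,523), v₉ = (−253,519,185), v₁₀ = (709,705,−13) in ℝ³, and define edge vectors eᵢ = v_{i+1} − vᵢ for i = 1, …, 9 and e₁₀ = v₁ − v₁₀. Then there is no w ∈ ℝ³ such that (−1)^{i+1} (w · eᵢ) > 0 for every i ∈ {1, …, 10}. -/

import Mathlib

/-!
A nonnegative, nonzero combination of the signed edges `(−1)^(i+1) eᵢ` vanishes: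
`2093257 e₁ + 784250 e₃ − 10877500 e₄ − 10040250 e₁₀ = 0`.
Pairing it with `w` would turn the ten strict inequalities into `0 < 0`
(the easy direction of Gordan's alternative).
-/

/-- The vertices of the paper's 10-stick polygonal realization of the knot `8_1`.
Here `vert8_1 i` is the paper's vertex `v_(i+1)`. -/
noncomputable def vert8_1 : Fin 10 → (Fin 3 → ℝ) :=
  ![![0, 0, 0], ![1000, 0, 0], ![392, 794, 0], ![-369, 229, 319], ![423, 839, 330], ![220, -113, 101], ![306, 800, -299], ![676, 367, 523], ![-253, 519, 185], ![709, 705, -13]]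

/-- The edge vectors `eᵢ = v_(i+1) − vᵢ` (cyclically, so `e₁₀ = v₁ − v₁₀`);
here `edge8_1 i` is the paper's `e_(i+1)`, using wrap-around addition on `Fin 10`. -/
noncomputable def edge8_1 (i : Fin 10) : Fin 3 → ℝ :=
  vert8_1 (i + 1) - vert8_1 i

open Matrix

theorem not_exists_forall_dotProduct_pos_of_sum_smul_eq_zero {ι n : Type*} [Fintype ι] [Fintype n]
    {u : ι → n → ℝ} {c : ι → ℝ} (hc : 0 ≤ c) (hc_ne : c ≠ 0) (hsum : ∑ i, c i • u i = 0) :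
    ¬ ∃ w : n → ℝ, ∀ i, 0 < w ⬝ᵥ u i := by
  rintro ⟨w, hw⟩
  obtain ⟨k, hk⟩ : ∃ k, c k ≠ 0 := Function.ne_iff.mp hc_ne
  have hpos : 0 < ∑ i, c i * (w ⬝ᵥ u i) :=
    Finset.sum_pos' (fun i _ => mul_nonneg (hc i) (hw i).le)
      ⟨k, Finset.mem_univ k, mul_pos ((hc k).lt_of_ne' hk) (hw k)⟩
  have hpair : ∑ i, c i * (w ⬝ᵥ u i) = w ⬝ᵥ ∑ i, c i • u i := by
    simp only [dotProduct_sum, dotProduct_smul, smul_eq_mul]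
  rw [hpair, hsum, dotProduct_zero] at hpos
  exact hpos.false

def certificate8_1 : Fin 10 → ℝ :=
  ![2093257, 0, 784250, 10877500, 0, 0, 0, 0, 0, 10040250]

theorem sum_certificate8_1_smul_signed_edge8_1 :
    ∑ i, certificate8_1 i • ((-1 : ℝ) ^ (i : ℕ) • edge8_1 i) = 0 := by
  funext j
  fin_cases j <;> simp [Fin.sum_univ_succ, certificate8_1, edge8_1, vert8_1] <;> norm_num

/-- There is no `w ∈ ℝ³` such that `(−1)^(i+1) (w · eᵢ) > 0` for every
`i ∈ {1, …, 10}`: no projection of this polygon (the knot `8_1`) to a line has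
5 local maxima. (With 0-based indexing `i : Fin 10`, the sign is `(−1)^i`.) -/
theorem no_alternating_direction_8_1 :
    ¬ ∃ w : Fin 3 → ℝ, ∀ i : Fin 10,
        0 < (-1 : ℝ) ^ (i : ℕ) * ∑ j : Fin 3, w j * edge8_1 i j := by
  have hc : 0 ≤ certificate8_1 := fun i => by fin_cases i <;> norm_num [certificate8_1]
  have hc_ne : certificate8_1 ≠ 0 := Function.ne_iff.mpr ⟨0, by norm_num [certificate8_1]⟩
  rintro ⟨w, hw⟩
  refine not_exists_forall_dotProduct_pos_of_sum_smul_eq_zero hc hc_ne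
    sum_certificate8_1_smul_signed_edge8_1 ⟨w, fun i => ?_⟩
  rw [dotProduct_smul, smul_eq_mul]
  exact hw i
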